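/- For all γ₁, γ₂ > 0, the cross-entropy between the scale Cauchy densities p_{γ₁} and p_{γ₂} is h×(p_{γ₁} : p_{γ₂}) = −∫_ℝ p_{γ₁}(x) log p_{γ₂}(x) dx = log( π(γ₁ + γ₂)²/γ₂ ); in particular, the differential entropy of p_γ is h(p_γ) = h×(p_γ : p_γ) = log(4πγ). -/

import Mathlib

/-!
Since `log p_γ₂(x) = log (γ₂ / π) - log (γ₂² + x²)`, everything reduces to
`∫ log (t² + x²) / (a² + x²) dx = (2π / a) log (a + t)` for `a, t > 0`.
Both sides have derivative `2π / (a (a + t))` in `t`: on the left, differentiate under the integral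
sign and integrate `1 / ((a² + x²)(t² + x²))` by partial fractions. The difference of the two sides
therefore is constant, and it tends to `0` as `t → ∞`: write `log (t² + x²) = 2 log t +
log (1 + (x / t)²)` and apply dominated convergence to the second term.
-/

open MeasureTheory Real

/-- The scale Cauchy density with scale `γ > 0`. -/
noncomputable def cauchyScale (γ : ℝ) (x : ℝ) : ℝ := γ / (Real.pi * (γ ^ 2 + x ^ 2))

open Filter Set Topology

lemma tendsto_div_one_add_sq {l : Filter ℝ} (hl : Tendsto (·⁻¹) l (𝓝 0)) :
    Tendsto (fun x : ℝ => x / (1 + x ^ 2)) l (𝓝 0) := by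
  have hcont : Continuous fun y : ℝ => y / (y ^ 2 + 1) :=
    continuous_id.div (by fun_prop) fun y => by positivity
  have h := (hcont.tendsto 0).comp hl
  rw [zero_div] at h
  refine h.congr fun x => ?_
  rcases eq_or_ne x 0 with rfl | hx
  · simp
  · simp only [Function.comp_apply]
    field_simp

lemma integrable_inv_one_add_sq_sq : Integrable fun x : ℝ => ((1 + x ^ 2) ^ 2)⁻¹ := by
  refine integrable_inv_one_add_sq.mono' (by fun_prop) (ae_of_all _ fun x => ?_)
  rw [norm_inv, norm_pow, Real.norm_of_nonneg (by positivity)]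
  exact inv_anti₀ (by positivity) (by nlinarith [sq_nonneg x])

lemma integral_inv_one_add_sq_sq : ∫ x : ℝ, ((1 + x ^ 2) ^ 2)⁻¹ = π / 2 := by
  set F : ℝ → ℝ := fun y => (arctan y + y / (1 + y ^ 2)) / 2
  have hF (x : ℝ) : HasDerivAt F ((1 + x ^ 2) ^ 2)⁻¹ x := by
    have hx : 1 + x ^ 2 ≠ 0 := by positivity
    refine (((hasDerivAt_arctan x).add ((hasDerivAt_id x).div
      ((hasDerivAt_pow 2 x).const_add 1) hx)).div_const 2).congr_deriv ?_
    simp only [id, Nat.cast_ofNat]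
    field_simp
    ring
  have hlim {l : Filter ℝ} {c : ℝ} (hl : Tendsto (·⁻¹) l (𝓝 0)) (hc : Tendsto arctan l (𝓝 c)) :
      Tendsto F l (𝓝 (c / 2)) := by
    simpa using (hc.add (tendsto_div_one_add_sq hl)).div_const 2
  rw [integral_of_hasDerivAt_of_tendsto hF integrable_inv_one_add_sq_sq
    (hlim tendsto_inv_atBot_zero (tendsto_nhds_of_tendsto_nhdsWithin tendsto_arctan_atBot))
    (hlim tendsto_inv_atTop_zero (tendsto_nhds_of_tendsto_nhdsWithin tendsto_arctan_atTop))]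
  ring

lemma inv_sq_add_sq_eq {a : ℝ} (ha : a ≠ 0) (x : ℝ) :
    (a ^ 2 + x ^ 2)⁻¹ = (a ^ 2)⁻¹ * (1 + (x / a) ^ 2)⁻¹ := by
  rw [← mul_inv]
  congr 1
  field_simp

lemma integrable_inv_sq_add_sq {a : ℝ} (ha : a ≠ 0) :
    Integrable fun x : ℝ => (a ^ 2 + x ^ 2)⁻¹ := by
  simpa only [inv_sq_add_sq_eq ha] using (integrable_inv_one_add_sq.comp_div ha).const_mul _

lemma integral_univ_inv_sq_add_sq {a : ℝ} (ha : a ≠ 0) :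
    ∫ x : ℝ, (a ^ 2 + x ^ 2)⁻¹ = π / |a| := by
  simp only [inv_sq_add_sq_eq ha, integral_const_mul,
    Measure.integral_comp_div (fun y => (1 + y ^ 2)⁻¹), integral_univ_inv_one_add_sq, smul_eq_mul]
  rw [← sq_abs a]
  field_simp

lemma integral_univ_inv_sq_add_sq_sq {a : ℝ} (ha : a ≠ 0) :
    ∫ x : ℝ, ((a ^ 2 + x ^ 2) ^ 2)⁻¹ = π / (2 * |a| ^ 3) := by
  have h (x : ℝ) : ((a ^ 2 + x ^ 2) ^ 2)⁻¹ = ((a ^ 2) ^ 2)⁻¹ * ((1 + (x / a) ^ 2) ^ 2)⁻¹ := by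
    rw [← inv_pow, inv_sq_add_sq_eq ha, mul_pow, inv_pow, inv_pow]
  simp only [h, integral_const_mul, Measure.integral_comp_div (fun y => ((1 + y ^ 2) ^ 2)⁻¹),
    integral_inv_one_add_sq_sq, smul_eq_mul]
  rw [← sq_abs a]
  field_simp

lemma integral_univ_inv_sq_add_sq_mul_inv_sq_add_sq {a b : ℝ} (ha : 0 < a) (hb : 0 < b) :
    ∫ x : ℝ, (a ^ 2 + x ^ 2)⁻¹ * (b ^ 2 + x ^ 2)⁻¹ = π / (a * b * (a + b)) := by
  rcases eq_or_ne a b with rfl | hab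
  · simp only [← sq, inv_pow]
    rw [integral_univ_inv_sq_add_sq_sq ha.ne', abs_of_pos ha]
    field_simp
    ring
  have hsq : b ^ 2 - a ^ 2 ≠ 0 := by
    rw [sub_ne_zero, Ne, sq_eq_sq₀ hb.le ha.le]
    exact hab.symm
  have hsplit (x : ℝ) : (a ^ 2 + x ^ 2)⁻¹ * (b ^ 2 + x ^ 2)⁻¹
      = (b ^ 2 - a ^ 2)⁻¹ * (a ^ 2 + x ^ 2)⁻¹ - (b ^ 2 - a ^ 2)⁻¹ * (b ^ 2 + x ^ 2)⁻¹ := by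
    have : a ^ 2 + x ^ 2 ≠ 0 := by positivity
    have : b ^ 2 + x ^ 2 ≠ 0 := by positivity
    field_simp
    ring
  simp only [hsplit]
  rw [integral_sub ((integrable_inv_sq_add_sq ha.ne').const_mul _)
      ((integrable_inv_sq_add_sq hb.ne').const_mul _), integral_const_mul, integral_const_mul,
    integral_univ_inv_sq_add_sq ha.ne', integral_univ_inv_sq_add_sq hb.ne', abs_of_pos ha,
    abs_of_pos hb]
  have : a + b ≠ 0 := by positivity
  field_simp
  ring

lemma integrable_inv_one_add_sq_mul_log_one_add_sq :
    Integrable fun x : ℝ => (1 + x ^ 2)⁻¹ * log (1 + x ^ 2) := by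
  refine ((integrable_rpow_neg_one_add_norm_sq (E := ℝ) (r := 3 / 2) (by norm_num)).const_mul
    4).mono' (by fun_prop) (ae_of_all _ fun x => ?_)
  have hpos : 0 < 1 + x ^ 2 := by positivity
  have hlog : 0 ≤ log (1 + x ^ 2) := log_nonneg (by nlinarith [sq_nonneg x])
  -- `log y ≤ 4 y ^ (1/4)` leaves a decay of order `|x| ^ (-3/2)`
  calc ‖(1 + x ^ 2)⁻¹ * log (1 + x ^ 2)‖
      = (1 + x ^ 2)⁻¹ * log (1 + x ^ 2) := Real.norm_of_nonneg (by positivity)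
    _ ≤ (1 + x ^ 2)⁻¹ * ((1 + x ^ 2) ^ (1 / 4 : ℝ) / (1 / 4)) :=
        mul_le_mul_of_nonneg_left (log_le_rpow_div hpos.le (by norm_num)) (by positivity)
    _ = 4 * (1 + ‖x‖ ^ 2) ^ (-(3 / 2 : ℝ) / 2) := by
        rw [Real.norm_eq_abs, sq_abs, show -(3 / 2 : ℝ) / 2 = 1 / 4 - 1 by norm_num,
          rpow_sub_one hpos.ne']
        ring

lemma inv_sq_add_sq_le {a : ℝ} (ha : a ≠ 0) (x : ℝ) :
    (a ^ 2 + x ^ 2)⁻¹ ≤ (1 + (a ^ 2)⁻¹) * (1 + x ^ 2)⁻¹ := by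
  rw [show (1 + (a ^ 2)⁻¹) * (1 + x ^ 2)⁻¹ = (a ^ 2 + 1) / (a ^ 2 * (1 + x ^ 2)) by field_simp,
    inv_eq_one_div, div_le_div_iff₀ (by positivity) (by positivity)]
  nlinarith [sq_nonneg x, sq_nonneg (a ^ 2)]

lemma abs_log_sq_add_sq_le {t : ℝ} (ht : t ≠ 0) (x : ℝ) :
    |log (t ^ 2 + x ^ 2)| ≤ |log (t ^ 2)| + log (1 + t ^ 2) + log (1 + x ^ 2) := by
  have ht2 : 0 < t ^ 2 := by positivity
  have h1 : 0 ≤ log (1 + t ^ 2) := log_nonneg (by linarith)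
  have h2 : 0 ≤ log (1 + x ^ 2) := log_nonneg (by nlinarith [sq_nonneg x])
  have hlow : log (t ^ 2) ≤ log (t ^ 2 + x ^ 2) := log_le_log ht2 (by nlinarith [sq_nonneg x])
  have hupp : log (t ^ 2 + x ^ 2) ≤ log (1 + t ^ 2) + log (1 + x ^ 2) := by
    rw [← log_mul (by positivity) (by positivity)]
    exact log_le_log (by positivity) (by nlinarith [sq_nonneg x, sq_nonneg t, mul_pos ht2 ht2])
  rw [abs_le]
  constructor <;> linarith [neg_abs_le (log (t ^ 2)), le_abs_self (log (t ^ 2))]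

lemma integrable_inv_sq_add_sq_mul_log_sq_add_sq {a t : ℝ} (ha : a ≠ 0) (ht : t ≠ 0) :
    Integrable fun x : ℝ => (a ^ 2 + x ^ 2)⁻¹ * log (t ^ 2 + x ^ 2) := by
  refine (((integrable_inv_sq_add_sq ha).const_mul (|log (t ^ 2)| + log (1 + t ^ 2))).add
    (integrable_inv_one_add_sq_mul_log_one_add_sq.const_mul (1 + (a ^ 2)⁻¹))).mono'
    (by fun_prop) (ae_of_all _ fun x => ?_)
  have hlog : 0 ≤ log (1 + x ^ 2) := log_nonneg (by nlinarith [sq_nonneg x])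
  have hinv : 0 ≤ (a ^ 2 + x ^ 2)⁻¹ := by positivity
  rw [norm_mul, Real.norm_of_nonneg hinv, Real.norm_eq_abs]
  calc (a ^ 2 + x ^ 2)⁻¹ * |log (t ^ 2 + x ^ 2)|
      ≤ (a ^ 2 + x ^ 2)⁻¹ * (|log (t ^ 2)| + log (1 + t ^ 2) + log (1 + x ^ 2)) :=
        mul_le_mul_of_nonneg_left (abs_log_sq_add_sq_le ht x) hinv
    _ ≤ (|log (t ^ 2)| + log (1 + t ^ 2)) * (a ^ 2 + x ^ 2)⁻¹
          + (1 + (a ^ 2)⁻¹) * ((1 + x ^ 2)⁻¹ * log (1 + x ^ 2)) := by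
        rw [mul_add, mul_comm _ (|log (t ^ 2)| + _), ← mul_assoc]
        gcongr
        exact inv_sq_add_sq_le ha x

lemma hasDerivAt_integral_inv_sq_add_sq_mul_log {a t : ℝ} (ha : 0 < a) (ht : 0 < t) :
    HasDerivAt (fun s => ∫ x : ℝ, (a ^ 2 + x ^ 2)⁻¹ * log (s ^ 2 + x ^ 2))
      (2 * π / (a * (a + t))) t := by
  have hball : Metric.ball t (t / 2) ⊆ Ioi (t / 2) := fun s hs => by
    rw [Metric.mem_ball, Real.dist_eq, abs_lt] at hs
    exact mem_Ioi.2 (by linarith)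
  have hderiv := hasDerivAt_integral_of_dominated_loc_of_deriv_le (x₀ := t)
    (F := fun s x => (a ^ 2 + x ^ 2)⁻¹ * log (s ^ 2 + x ^ 2))
    (F' := fun s x => (a ^ 2 + x ^ 2)⁻¹ * (2 * s / (s ^ 2 + x ^ 2)))
    (bound := fun x => 4 / t * (a ^ 2 + x ^ 2)⁻¹) (Metric.ball_mem_nhds t (half_pos ht))
    (Eventually.of_forall fun s => by fun_prop)
    (integrable_inv_sq_add_sq_mul_log_sq_add_sq ha.ne' ht.ne') (by fun_prop)
    (ae_of_all _ fun x s hs => ?bound) ((integrable_inv_sq_add_sq ha.ne').const_mul _)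
    (ae_of_all _ fun x s hs => ?deriv)
  · refine hderiv.2.congr_deriv ?_
    have h (x : ℝ) : (a ^ 2 + x ^ 2)⁻¹ * (2 * t / (t ^ 2 + x ^ 2))
        = 2 * t * ((a ^ 2 + x ^ 2)⁻¹ * (t ^ 2 + x ^ 2)⁻¹) := by ring
    simp only [h, integral_const_mul, integral_univ_inv_sq_add_sq_mul_inv_sq_add_sq ha ht]
    field_simp
  case bound =>
    have hs : t / 2 < s := hball hs
    have hs0 : 0 < s := by linarith
    rw [Real.norm_of_nonneg (by positivity), mul_comm]
    refine mul_le_mul_of_nonneg_right ?_ (by positivity)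
    rw [div_le_div_iff₀ (by positivity) ht]
    nlinarith [sq_nonneg x, sq_nonneg (s - t)]
  case deriv =>
    have hs : 0 < s := (half_pos ht).trans (hball hs)
    have h := (((hasDerivAt_pow 2 s).add_const (x ^ 2)).log (by positivity)).const_mul
      (a ^ 2 + x ^ 2)⁻¹
    simpa [mul_comm] using h

lemma integral_inv_sq_add_sq_mul_log_sq_add_sq_eq_add {a t : ℝ} (ha : a ≠ 0) (ht : t ≠ 0) :
    ∫ x : ℝ, (a ^ 2 + x ^ 2)⁻¹ * log (t ^ 2 + x ^ 2)
      = 2 * π / |a| * log t + ∫ x : ℝ, (a ^ 2 + x ^ 2)⁻¹ * log (1 + (x / t) ^ 2) := by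
  have hsplit (x : ℝ) : (a ^ 2 + x ^ 2)⁻¹ * log (1 + (x / t) ^ 2)
      = (a ^ 2 + x ^ 2)⁻¹ * log (t ^ 2 + x ^ 2) - 2 * log t * (a ^ 2 + x ^ 2)⁻¹ := by
    have : t ^ 2 + x ^ 2 = t ^ 2 * (1 + (x / t) ^ 2) := by field_simp
    rw [this, log_mul (by positivity) (by positivity), log_pow]
    push_cast
    ring
  simp only [hsplit]
  rw [integral_sub (integrable_inv_sq_add_sq_mul_log_sq_add_sq ha ht)
    ((integrable_inv_sq_add_sq ha).const_mul _), integral_const_mul,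
    integral_univ_inv_sq_add_sq ha]
  ring

lemma tendsto_integral_inv_sq_add_sq_mul_log_one_add_div_sq {a : ℝ} (ha : a ≠ 0) :
    Tendsto (fun t => ∫ x : ℝ, (a ^ 2 + x ^ 2)⁻¹ * log (1 + (x / t) ^ 2)) atTop (𝓝 0) := by
  have hbound : Integrable fun x : ℝ => (a ^ 2 + x ^ 2)⁻¹ * log (1 + x ^ 2) := by
    simpa only [one_pow] using integrable_inv_sq_add_sq_mul_log_sq_add_sq ha one_ne_zero
  have hle (t : ℝ) (ht : 1 ≤ t) (x : ℝ) :
      ‖(a ^ 2 + x ^ 2)⁻¹ * log (1 + (x / t) ^ 2)‖ ≤ (a ^ 2 + x ^ 2)⁻¹ * log (1 + x ^ 2) := by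
    have hdiv : (x / t) ^ 2 ≤ x ^ 2 := by
      rw [div_pow, div_le_iff₀ (by positivity)]
      nlinarith [sq_nonneg x, one_le_pow₀ (n := 2) ht]
    rw [Real.norm_of_nonneg (mul_nonneg (by positivity) (log_nonneg (by nlinarith)))]
    gcongr
  have hpointwise (x : ℝ) :
      Tendsto (fun t : ℝ => (a ^ 2 + x ^ 2)⁻¹ * log (1 + (x / t) ^ 2)) atTop (𝓝 0) := by
    have hlim : Tendsto (fun t : ℝ => 1 + (x / t) ^ 2) atTop (𝓝 1) := by
      simpa using ((tendsto_const_nhds (x := x)).div_atTop tendsto_id).pow 2 |>.const_add 1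
    simpa using ((continuousAt_log one_ne_zero).tendsto.comp hlim).const_mul (a ^ 2 + x ^ 2)⁻¹
  simpa using tendsto_integral_filter_of_dominated_convergence _
    (Eventually.of_forall fun t => by fun_prop)
    ((eventually_ge_atTop 1).mono fun t ht => ae_of_all _ (hle t ht)) hbound
    (ae_of_all _ hpointwise)

theorem integral_inv_sq_add_sq_mul_log_sq_add_sq {a t : ℝ} (ha : 0 < a) (ht : 0 < t) :
    ∫ x : ℝ, (a ^ 2 + x ^ 2)⁻¹ * log (t ^ 2 + x ^ 2) = 2 * π / a * log (a + t) := by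
  set G : ℝ → ℝ := fun s => ∫ x : ℝ, (a ^ 2 + x ^ 2)⁻¹ * log (s ^ 2 + x ^ 2)
  have hG (s : ℝ) (hs : 0 < s) : HasDerivAt G (2 * π / (a * (a + s))) s :=
    hasDerivAt_integral_inv_sq_add_sq_mul_log ha hs
  have hlog (s : ℝ) (hs : 0 < s) :
      HasDerivAt (fun s => 2 * π / a * log (a + s)) (2 * π / (a * (a + s))) s := by
    refine ((((hasDerivAt_id s).const_add a).log (by positivity)).const_mul
      (2 * π / a)).congr_deriv ?_
    simp only [id]
    field_simp
  obtain ⟨c, hc⟩ := isOpen_Ioi.exists_eq_add_of_deriv_eq isPreconnected_Ioi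
    (fun s hs => (hG s hs).differentiableAt.differentiableWithinAt)
    (fun s hs => (hlog s hs).differentiableAt.differentiableWithinAt)
    (fun s hs => (hG s hs).deriv.trans (hlog s hs).deriv.symm)
  have hlim : Tendsto (fun s => G s - 2 * π / a * log (a + s)) atTop (𝓝 0) := by
    have h := (tendsto_integral_inv_sq_add_sq_mul_log_one_add_div_sq ha.ne').sub
      ((tendsto_log_comp_add_sub_log a).const_mul (2 * π / a))
    rw [mul_zero, sub_zero] at h
    refine h.congr' ((eventually_gt_atTop 0).mono fun s hs => ?_)
    simp only [G, integral_inv_sq_add_sq_mul_log_sq_add_sq_eq_add ha.ne' hs.ne', abs_of_pos ha,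
      add_comm s]
    ring
  have hc0 : c = 0 := by
    refine tendsto_nhds_unique (tendsto_const_nhds.congr' ?_) hlim
    filter_upwards [eventually_gt_atTop 0] with s hs
    rw [hc hs]
    ring
  simpa [hc0] using hc ht

lemma cauchyScale_mul_log_cauchyScale {γ₁ γ₂ : ℝ} (h₂ : γ₂ ≠ 0) (x : ℝ) :
    cauchyScale γ₁ x * log (cauchyScale γ₂ x) = γ₁ / π * ((log γ₂ - log π) * (γ₁ ^ 2 + x ^ 2)⁻¹
      - (γ₁ ^ 2 + x ^ 2)⁻¹ * log (γ₂ ^ 2 + x ^ 2)) := by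
  rw [cauchyScale, cauchyScale, log_div h₂ (by positivity), log_mul pi_ne_zero (by positivity),
    div_mul_eq_div_div, div_eq_mul_inv _ (γ₁ ^ 2 + x ^ 2)]
  ring

lemma neg_integral_cauchyScale_mul_log_cauchyScale {γ₁ γ₂ : ℝ} (h₁ : 0 < γ₁) (h₂ : 0 < γ₂) :
    -∫ x, cauchyScale γ₁ x * log (cauchyScale γ₂ x) = log (π * (γ₁ + γ₂) ^ 2 / γ₂) := by
  simp only [cauchyScale_mul_log_cauchyScale h₂.ne', integral_const_mul]
  rw [integral_sub ((integrable_inv_sq_add_sq h₁.ne').const_mul _)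
      (integrable_inv_sq_add_sq_mul_log_sq_add_sq h₁.ne' h₂.ne'), integral_const_mul,
    integral_univ_inv_sq_add_sq h₁.ne', abs_of_pos h₁,
    integral_inv_sq_add_sq_mul_log_sq_add_sq h₁ h₂, log_div (by positivity) h₂.ne',
    log_mul pi_ne_zero (by positivity), log_pow]
  field_simp
  ring

/-- The cross-entropy between scale Cauchy densities is
`h×(p_{γ₁} : p_{γ₂}) = log(π(γ₁+γ₂)²/γ₂)`; in particular the differential entropy of
`p_γ` is `log(4πγ)`. -/
theorem cross_entropy_scale_cauchy
    (γ₁ γ₂ : ℝ) (h₁ : 0 < γ₁) (h₂ : 0 < γ₂) :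
    (-∫ x, cauchyScale γ₁ x * Real.log (cauchyScale γ₂ x)
      = Real.log (Real.pi * (γ₁ + γ₂) ^ 2 / γ₂)) ∧
    (-∫ x, cauchyScale γ₁ x * Real.log (cauchyScale γ₁ x)
      = Real.log (4 * Real.pi * γ₁)) := by
  refine ⟨neg_integral_cauchyScale_mul_log_cauchyScale h₁ h₂, ?_⟩
  rw [neg_integral_cauchyScale_mul_log_cauchyScale h₁ h₁]
  congr 1
  field_simp
  ring
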